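/- arXiv:0901.2988 — 6 statements merged into one kernel-verified Lean document; each statement's English description precedes it below -/
import Mathlib

section
/- Every r-uniform hypergraph with chromatic number greater than t contains a copy of every r-uniform hypertree with t edges. -/
open Finset

structure FinHypergraph (V : Type*) where
  edges : Finset (Finset V)

namespace FinHypergraph

variable {V : Type*} [DecidableEq V]

/-- `H` is `r`-uniform: every edge has exactly `r` vertices. -/
def Uniform (H : FinHypergraph V) (r : ℕ) : Prop := ∀ e ∈ H.edges, e.card = r

/-- Two vertices are adjacent if some edge contains both. -/
def adj (H : FinHypergraph V) (u w : V) : Prop := ∃ e ∈ H.edges, u ∈ e ∧ w ∈ e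

/-- `H` is connected: any two vertices are joined by a walk. -/
def Connected (H : FinHypergraph V) : Prop := ∀ u w : V, Relation.ReflTransGen H.adj u w

/-- No two distinct edges intersect in more than one vertex. -/
def Linear (H : FinHypergraph V) : Prop :=
  ∀ e ∈ H.edges, ∀ f ∈ H.edges, e ≠ f → (e ∩ f).card ≤ 1

/-- A Berge cycle: distinct vertices `v 0, …, v (k-1)` and distinct edges
`e 0, …, e (k-1)`, `k ≥ 2`, with `{v i, v (i+1)} ⊆ e i` cyclically. -/
def HasBergeCycle (H : FinHypergraph V) : Prop :=
  ∃ k : ℕ, ∃ _ : 2 ≤ k, ∃ (v : Fin k → V) (e : Fin k → Finset V),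
    Function.Injective v ∧ Function.Injective e ∧
    (∀ i, e i ∈ H.edges) ∧
    (∀ i : Fin k, v i ∈ e i ∧ v ⟨(i.val + 1) % k, Nat.mod_lt _ (by omega)⟩ ∈ e i)

/-- A hypertree: connected, linear, with no Berge cycle. -/
def IsHypertree (H : FinHypergraph V) : Prop :=
  H.Connected ∧ H.Linear ∧ ¬ H.HasBergeCycle

/-- A proper coloring: no edge is monochromatic. -/
def Proper (H : FinHypergraph V) {k : ℕ} (c : V → Fin k) : Prop :=
  ∀ e ∈ H.edges, ¬ ∀ u ∈ e, ∀ w ∈ e, c u = c w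

/-- The chromatic number: least number of colors in a proper coloring. -/
noncomputable def chromaticNumber (H : FinHypergraph V) : ℕ :=
  sInf {k | ∃ c : V → Fin k, H.Proper c}

/-- `H` contains a copy of `T`: an injective vertex map sending edges to edges. -/
def ContainsCopy {W : Type*} [DecidableEq W] (H : FinHypergraph V) (T : FinHypergraph W) : Prop :=
  ∃ φ : W → V, Function.Injective φ ∧ ∀ e ∈ T.edges, e.image φ ∈ H.edges

end FinHypergraph

/-- The complete `r`-uniform hypergraph on `Fin n`. -/
def completeHypergraph (n r : ℕ) : FinHypergraph (Fin n) :=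
  ⟨Finset.univ.powersetCard r⟩


/-!
Take a proper coloring `γ : V → ℕ` of `H` that is minimal for the pointwise order. Then for every
vertex `z` and every `α < γ z` some edge through `z` has all its other vertices colored `α`, since
otherwise `z` could be recolored with `α`. As `χ(H) > t`, some vertex `v` has `γ v ≥ t`.

The edges of the tree can be listed so that each meets the union of the earlier ones in exactly
one vertex: connectivity gives at least one, a second one would close a Berge cycle. Embed them
greedily, starting at `v`: the `i`-th edge is attached at an embedded vertex of color `> t - i`,
and is sent to an edge through its image whose other vertices have color `t - i`. These vertices
are fresh, because every vertex embedded so far has a larger color.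
-/

lemma Finset.exists_bijOn_eqOn_compl {α β : Type*} {A : Finset α} {B : Finset β}
    (h : A.card = B.card) (f : α → β) :
    ∃ f' : α → β, Set.BijOn f' A B ∧ Set.EqOn f' f (↑A)ᶜ := by
  classical
  let e := A.equivOfCardEq h
  refine ⟨fun x => if hx : x ∈ A then e ⟨x, hx⟩ else f x,
    ⟨fun x hx => ?_, fun x hx y hy hxy => ?_, fun y hy => ?_⟩, fun x hx => dif_neg hx⟩
  · simp [show x ∈ A from hx]
  · simp only [show x ∈ A from hx, show y ∈ A from hy, dif_pos] at hxy
    exact congrArg Subtype.val (e.injective (Subtype.ext hxy))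
  · obtain ⟨⟨x, hx⟩, hex⟩ := e.surjective ⟨y, hy⟩
    exact ⟨x, hx, by simp [hx, hex]⟩

namespace FinHypergraph

variable {V W : Type*}

instance (H : FinHypergraph V) : Std.Symm H.adj :=
  ⟨fun _ _ ⟨e, he, hu, hw⟩ => ⟨e, he, hw, hu⟩⟩

def NatProper (H : FinHypergraph V) (γ : V → ℕ) : Prop :=
  ∀ e ∈ H.edges, ¬ ∀ u ∈ e, ∀ w ∈ e, γ u = γ w

def Saturated (H : FinHypergraph V) (γ : V → ℕ) : Prop :=
  ∀ z, ∀ α < γ z, ∃ e ∈ H.edges, z ∈ e ∧ ∀ y ∈ e, y ≠ z → γ y = α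

lemma exists_natProper_of_chromaticNumber_pos {H : FinHypergraph V}
    (h : 0 < H.chromaticNumber) : ∃ γ : V → ℕ, H.NatProper γ := by
  obtain ⟨k, c, hc⟩ := Nat.nonempty_of_pos_sInf h
  exact ⟨fun x => c x, fun e he hmono => hc e he fun u hu w hw => Fin.ext (hmono u hu w hw)⟩

lemma NatProper.exists_le_of_lt_chromaticNumber {H : FinHypergraph V} {γ : V → ℕ}
    (hγ : H.NatProper γ) {t : ℕ} (ht : t < H.chromaticNumber) : ∃ v, t ≤ γ v := by
  by_contra! hlt
  have hproper : ∃ c : V → Fin t, H.Proper c :=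
    ⟨fun x => ⟨γ x, hlt x⟩, fun e he hmono =>
      hγ e he fun u hu w hw => congrArg Fin.val (hmono u hu w hw)⟩
  exact (Nat.sInf_le hproper).not_gt ht

lemma exists_natProper_saturated [Finite V] {H : FinHypergraph V}
    (h : ∃ γ : V → ℕ, H.NatProper γ) : ∃ γ, H.NatProper γ ∧ H.Saturated γ := by
  classical
  obtain ⟨γ, hγ, hmin⟩ := wellFounded_lt.has_min {γ | H.NatProper γ} h
  refine ⟨γ, hγ, fun z α hα => ?_⟩
  by_contra! hno
  refine hmin (Function.update γ z α) (fun e he hmono => ?_) (update_lt_self_iff.2 hα)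
  by_cases hz : z ∈ e
  · obtain ⟨y, hy, hyz, hyα⟩ := hno e he hz
    have := hmono y hy z hz
    rw [Function.update_of_ne hyz, Function.update_self] at this
    exact hyα this
  · refine hγ e he fun u hu w hw => ?_
    have := hmono u hu w hw
    rwa [Function.update_of_ne (ne_of_mem_of_not_mem hu hz),
      Function.update_of_ne (ne_of_mem_of_not_mem hw hz)] at this

/-- `v 0, h 0, v 1, …, h (n - 1), v n` is a walk through edges of `C`. -/
def IsWalk (C : Finset (Finset W)) (n : ℕ) (v : ℕ → W) (h : ℕ → Finset W) : Prop :=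
  ∀ k < n, h k ∈ C ∧ v k ∈ h k ∧ v (k + 1) ∈ h k

section Walk

variable {C : Finset (Finset W)} {n : ℕ} {v : ℕ → W} {h : ℕ → Finset W}

lemma exists_isWalk_of_reflTransGen {x y : W} (hxy : Relation.ReflTransGen (mk C).adj x y) :
    ∃ n v h, IsWalk C n v h ∧ v 0 = x ∧ v n = y := by
  induction hxy using Relation.ReflTransGen.head_induction_on with
  | refl => exact ⟨0, fun _ => y, fun _ => ∅, fun k hk => absurd hk k.not_lt_zero, rfl, rfl⟩
  | @head a b hab _ ih =>
    obtain ⟨e, he, ha, hb⟩ := hab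
    obtain ⟨n, v, h, hw, h0, hn⟩ := ih
    refine ⟨n + 1, fun | 0 => a | k + 1 => v k, fun | 0 => e | k + 1 => h k, ?_, rfl, hn⟩
    rintro (_ | k) hk
    · exact ⟨he, ha, (h0 ▸ hb :)⟩
    · exact hw k (by omega)

/-- Jump from `v a` straight into the edge `h b`, skipping the `b - a` steps in between. -/
lemma IsWalk.shortcut (hw : IsWalk C n v h) {a b : ℕ} (hab : a ≤ b) (hbn : b < n)
    (hin : v a ∈ h b) :
    ∃ v' h', IsWalk C (n - (b - a)) v' h' ∧ v' 0 = v 0 ∧ v' (n - (b - a)) = v n := by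
  refine ⟨fun k => if k ≤ a then v k else v (k + (b - a)),
    fun k => if k < a then h k else h (k + (b - a)), fun k hk => ?_, by simp, ?_⟩
  · rcases lt_trichotomy k a with hka | rfl | hka
    · simpa [hka, hka.le, Nat.add_one_le_iff.2 hka] using hw k (by omega)
    · have hb : k + (b - k) = b := by omega
      simpa [hb, show k + 1 + (b - k) = b + 1 by omega] using ⟨(hw b hbn).1, hin, (hw b hbn).2.2⟩
    · simpa [hka.not_ge, hka.not_gt, show ¬ k + 1 ≤ a by omega,
        show k + 1 + (b - a) = k + (b - a) + 1 by omega] using hw (k + (b - a)) (by omega)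
  · simp [show ¬ n - (b - a) ≤ a by omega, show n - (b - a) + (b - a) = n by omega]

lemma exists_isWalk_injective {x y : W} (hxy : Relation.ReflTransGen (mk C).adj x y) :
    ∃ n v h, IsWalk C n v h ∧ v 0 = x ∧ v n = y ∧
      (∀ a b, a < b → b ≤ n → v a ≠ v b) ∧ (∀ a b, a < b → b < n → h a ≠ h b) := by
  classical
  have hex := exists_isWalk_of_reflTransGen hxy
  obtain ⟨v, h, hw, h0, hn⟩ := Nat.find_spec hex
  have hmin : ∀ m < Nat.find hex, ¬ ∃ v h, IsWalk C m v h ∧ v 0 = x ∧ v m = y :=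
    fun m hm => Nat.find_min hex hm
  have hshort : ∀ a b, a ≤ b → b < Nat.find hex → v a ∈ h b → b ≤ a := by
    intro a b hab hb hin
    obtain ⟨v', h', hw', h0', hn'⟩ := hw.shortcut hab hb hin
    by_contra hlt
    exact hmin _ (by omega) ⟨v', h', hw', h0'.trans h0, hn'.trans hn⟩
  refine ⟨_, v, h, hw, h0, hn, fun a b hab hb heq => ?_, fun a b hab hb heq => ?_⟩
  · rcases hb.lt_or_eq with hb | rfl
    · exact absurd (hshort a b hab.le hb (heq ▸ (hw b hb).2.1)) hab.not_ge
    · exact hmin a hab ⟨v, h, fun k hk => hw k (by omega), h0, heq ▸ hn⟩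
  · exact absurd (hshort a b hab.le hb (heq ▸ (hw a (by omega)).2.1)) hab.not_ge

lemma hasBergeCycle_of_isWalk {T : FinHypergraph W} (hC : C ⊆ T.edges) {g : Finset W}
    (hg : g ∈ T.edges) (hgC : g ∉ C) (hw : IsWalk C n v h) (hn : 0 < n)
    (hv : ∀ a b, a < b → b ≤ n → v a ≠ v b) (hh : ∀ a b, a < b → b < n → h a ≠ h b)
    (h0 : v 0 ∈ g) (hvn : v n ∈ g) : T.HasBergeCycle := by
  refine ⟨n + 1, by omega, fun i => v i, fun i => if i.val < n then h i else g, ?_, ?_, ?_, ?_⟩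
  · intro i j hij
    by_contra hne
    wlog hlt : i < j generalizing i j
    · exact this hij.symm (Ne.symm hne) (lt_of_le_of_ne (not_lt.1 hlt) (Ne.symm hne))
    exact hv _ _ hlt (by omega) hij
  · intro i j hij
    by_contra hne
    wlog hlt : i < j generalizing i j
    · exact this hij.symm (Ne.symm hne) (lt_of_le_of_ne (not_lt.1 hlt) (Ne.symm hne))
    have hi : i.val < n := by omega
    by_cases hj : j.val < n
    · simp only [hi, hj, if_true] at hij
      exact hh _ _ hlt hj hij
    · simp only [hi, hj, if_true, if_false] at hij
      exact hgC (hij ▸ (hw i hi).1)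
  · intro i
    dsimp only
    split_ifs with hi
    · exact hC (hw i hi).1
    · exact hg
  · intro i
    dsimp only
    split_ifs with hi
    · rw [Nat.mod_eq_of_lt (by omega)]
      exact (hw i hi).2
    · have hi : i.val = n := by omega
      simp only [hi, Nat.mod_self]
      exact ⟨hvn, h0⟩

end Walk

lemma hasBergeCycle_of_reflTransGen {T : FinHypergraph W} {C : Finset (Finset W)}
    (hC : C ⊆ T.edges) {g : Finset W} (hg : g ∈ T.edges) (hgC : g ∉ C) {x y : W} (hx : x ∈ g)
    (hy : y ∈ g) (hxy : x ≠ y) (hconn : Relation.ReflTransGen (mk C).adj x y) :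
    T.HasBergeCycle := by
  obtain ⟨n, v, h, hw, h0, hn, hv, hh⟩ := exists_isWalk_injective hconn
  refine hasBergeCycle_of_isWalk hC hg hgC hw (Nat.pos_of_ne_zero ?_) hv hh (h0 ▸ hx) (hn ▸ hy)
  rintro rfl
  exact hxy (h0.symm.trans hn)

section Tree

variable [DecidableEq W]

lemma exists_edge_inter_eq_singleton {T : FinHypergraph W} (hconn : T.Connected)
    (hacyc : ¬ T.HasBergeCycle) (hne : ∀ e ∈ T.edges, e.Nonempty) {S : Finset (Finset W)}
    (hST : S ⊂ T.edges) {X : Finset W} {p₀ : W} (hp₀ : p₀ ∈ X) (hSX : ∀ e ∈ S, e ⊆ X)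
    (hX : ∀ x ∈ X, Relation.ReflTransGen (mk S).adj p₀ x) :
    ∃ g ∈ T.edges, g ∉ S ∧ ∃ p, g ∩ X = {p} := by
  have hmeet : ∃ g ∈ T.edges, g ∉ S ∧ (g ∩ X).Nonempty := by
    by_contra! hdisj
    have hreach : ∀ w, Relation.ReflTransGen T.adj p₀ w → w ∈ X := by
      intro w hw
      induction hw with
      | refl => exact hp₀
      | @tail b c _ hbc ih =>
        obtain ⟨e, he, hb, hc⟩ := hbc
        by_cases heS : e ∈ S
        · exact hSX e heS hc
        · exact absurd (hdisj e he heS) (nonempty_iff_ne_empty.1 ⟨b, mem_inter.2 ⟨hb, ih⟩⟩)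
    obtain ⟨g, hg, hgS⟩ := exists_of_ssubset hST
    obtain ⟨u, hu⟩ := hne g hg
    exact nonempty_iff_ne_empty.1 ⟨u, mem_inter.2 ⟨hu, hreach u (hconn p₀ u)⟩⟩ (hdisj g hg hgS)
  obtain ⟨g, hg, hgS, hgX⟩ := hmeet
  refine ⟨g, hg, hgS, card_eq_one.1 (le_antisymm (card_le_one.2 ?_) hgX.card_pos)⟩
  intro a ha b hb
  by_contra hab
  rw [mem_inter] at ha hb
  exact hacyc (hasBergeCycle_of_reflTransGen hST.subset hg hgS ha.1 hb.1 hab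
    ((Std.Symm.symm _ _ (hX a ha.2)).trans (hX b hb.2)))

end Tree

section Copy

variable [DecidableEq V] [DecidableEq W]

structure PartialCopy (H : FinHypergraph V) (γ : V → ℕ) (c : ℕ) (S : Finset (Finset W))
    (X : Finset W) (φ : W → V) : Prop where
  injOn : Set.InjOn φ X
  subset : ∀ e ∈ S, e ⊆ X
  image_mem : ∀ e ∈ S, e.image φ ∈ H.edges
  le_color : ∀ x ∈ X, c ≤ γ (φ x)

lemma PartialCopy.extend {H : FinHypergraph V} {γ : V → ℕ} {c r : ℕ} {S : Finset (Finset W)}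
    {X : Finset W} {φ : W → V} (hφ : H.PartialCopy γ (c + 1) S X φ) (hH : H.Uniform r)
    (hsat : H.Saturated γ) {g : Finset W} (hg : g.card = r) {p : W} (hgX : g ∩ X = {p}) :
    ∃ φ', H.PartialCopy γ c (insert g S) (X ∪ g) φ' := by
  have hp : p ∈ g ∧ p ∈ X := mem_inter.1 (hgX ▸ mem_singleton_self p)
  obtain ⟨e, he, hpe, hcol⟩ := hsat (φ p) c (hφ.le_color p hp.2)
  have hcard : (g.erase p).card = (e.erase (φ p)).card := by
    rw [card_erase_of_mem hp.1, card_erase_of_mem hpe, hg, hH e he]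
  obtain ⟨φ', hbij, hout⟩ := exists_bijOn_eqOn_compl hcard φ
  have hfresh : ∀ x ∈ X, x ∉ g.erase p := fun x hx hxg =>
    (mem_erase.1 hxg).1 (mem_singleton.1 (hgX ▸ mem_inter.2 ⟨(mem_erase.1 hxg).2, hx⟩))
  have hold : ∀ x ∈ X, φ' x = φ x := fun x hx => hout (hfresh x hx)
  have hnew : ∀ x ∈ g.erase p, γ (φ' x) = c := fun x hx =>
    hcol _ (mem_erase.1 (hbij.mapsTo hx)).2 (mem_erase.1 (hbij.mapsTo hx)).1
  have hXg : X ∪ g = X ∪ g.erase p := by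
    nth_rw 1 [← insert_erase hp.1]
    rw [union_insert, insert_eq_of_mem (mem_union_left _ hp.2)]
  have himage : g.image φ' = e := by
    have hrest : (g.erase p).image φ' = e.erase (φ p) :=
      coe_inj.1 (by rw [coe_image, hbij.image_eq])
    rw [← insert_erase hp.1, image_insert, hold p hp.2, hrest, insert_erase hpe]
  refine ⟨φ', ⟨?_, ?_, ?_, ?_⟩⟩
  · rw [hXg, coe_union, Set.injOn_union (disjoint_coe.2 (disjoint_left.2 hfresh))]
    refine ⟨hφ.injOn.congr fun x hx => (hold x hx).symm, hbij.injOn, fun x hx y hy hxy => ?_⟩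
    have := hφ.le_color x hx
    rw [← hold x hx, hxy, hnew y hy] at this
    omega
  · intro e' he'
    rcases mem_insert.1 he' with rfl | he'
    · exact subset_union_right
    · exact (hφ.subset e' he').trans subset_union_left
  · intro e' he'
    rcases mem_insert.1 he' with rfl | he'
    · exact himage ▸ he
    · rw [image_congr fun x hx => hold x (hφ.subset e' he' hx)]
      exact hφ.image_mem e' he'
  · intro x hx
    rcases mem_union.1 (hXg ▸ hx) with hx | hx
    · rw [hold x hx]
      have := hφ.le_color x hx
      omega
    · rw [hnew x hx]

lemma Saturated.exists_partialCopy {H : FinHypergraph V} {T : FinHypergraph W} {γ : V → ℕ}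
    {r : ℕ} (hsat : H.Saturated γ) (hH : H.Uniform r) (hconn : T.Connected)
    (hacyc : ¬ T.HasBergeCycle) (hT : T.Uniform r) (hr : 0 < r) (p₀ : W) {v : V}
    (hv : T.edges.card ≤ γ v) :
    ∀ k ≤ T.edges.card, ∃ S ⊆ T.edges, S.card = k ∧ ∃ X φ, p₀ ∈ X ∧
      (∀ x ∈ X, Relation.ReflTransGen (mk S).adj p₀ x) ∧
      H.PartialCopy γ (T.edges.card - k) S X φ := by
  intro k
  induction k with
  | zero =>
    intro _
    refine ⟨∅, empty_subset _, rfl, {p₀}, fun _ => v, mem_singleton_self p₀, ?_,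
      ⟨?_, ?_, ?_, ?_⟩⟩ <;> simp [hv, Relation.ReflTransGen.refl]
  | succ k ih =>
    intro hk
    obtain ⟨S, hS, hcard, X, φ, hp₀, hX, hφ⟩ := ih (by omega)
    have hST : S ⊂ T.edges := Finset.ssubset_iff_subset_ne.2 ⟨hS, by rintro rfl; omega⟩
    have hne : ∀ e ∈ T.edges, e.Nonempty := fun e he => card_pos.1 (hT e he ▸ hr)
    obtain ⟨g, hg, hgS, p, hgX⟩ :=
      exists_edge_inter_eq_singleton hconn hacyc hne hST hp₀ hφ.subset hX
    rw [show T.edges.card - k = T.edges.card - (k + 1) + 1 by omega] at hφ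
    obtain ⟨φ', hφ'⟩ := hφ.extend hH hsat (hT g hg) hgX
    have hmono : (mk S).adj ≤ (mk (insert g S)).adj := fun a b ⟨e, he, ha, hb⟩ =>
      ⟨e, mem_insert_of_mem he, ha, hb⟩
    have hp : p ∈ g ∧ p ∈ X := mem_inter.1 (hgX ▸ mem_singleton_self p)
    refine ⟨insert g S, insert_subset hg hS, by rw [card_insert_of_notMem hgS, hcard], X ∪ g, φ',
      mem_union_left _ hp₀, fun x hx => ?_, hφ'⟩
    rcases mem_union.1 hx with hx | hx
    · exact Relation.ReflTransGen.mono hmono _ _ (hX x hx)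
    · exact (Relation.ReflTransGen.mono hmono _ _ (hX p hp.2)).tail
        ⟨g, mem_insert_self g S, hp.1, hx⟩

theorem Saturated.containsCopy {H : FinHypergraph V} {T : FinHypergraph W} {γ : V → ℕ}
    {r : ℕ} (hsat : H.Saturated γ) (hH : H.Uniform r) (hconn : T.Connected)
    (hacyc : ¬ T.HasBergeCycle) (hT : T.Uniform r) (hr : 0 < r) (p₀ : W) {v : V}
    (hv : T.edges.card ≤ γ v) : H.ContainsCopy T := by
  obtain ⟨S, hS, hcard, X, φ, hp₀, -, hφ⟩ :=
    hsat.exists_partialCopy hH hconn hacyc hT hr p₀ hv _ le_rfl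
  obtain rfl : S = T.edges := eq_of_subset_of_card_le hS hcard.ge
  have hX : ∀ w, w ∈ X := fun w => by
    induction hconn p₀ w with
    | refl => exact hp₀
    | tail _ hbc _ =>
      obtain ⟨e, he, -, hc⟩ := hbc
      exact hφ.subset e he hc
  exact ⟨φ, fun x y hxy => hφ.injOn (hX x) (hX y) hxy, hφ.image_mem⟩

end Copy

end FinHypergraph

theorem stmt3_general {V : Type*} [Fintype V] [DecidableEq V] (r t : ℕ) (hr : 2 ≤ r) (ht : 1 ≤ t)
    (H : FinHypergraph V) (hH : H.Uniform r) (hchi : t < H.chromaticNumber)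
    {W : Type*} [DecidableEq W] (T : FinHypergraph W)
    (hT : T.IsHypertree) (hu : T.Uniform r) (hte : T.edges.card = t) :
    H.ContainsCopy T := by
  obtain ⟨γ, hγ, hsat⟩ := FinHypergraph.exists_natProper_saturated
    (FinHypergraph.exists_natProper_of_chromaticNumber_pos (by omega : 0 < H.chromaticNumber))
  obtain ⟨v, hv⟩ := hγ.exists_le_of_lt_chromaticNumber hchi
  obtain ⟨e, he⟩ := card_pos.1 (hte ▸ ht : 0 < T.edges.card)
  obtain ⟨p₀, -⟩ := card_pos.1 (by rw [hu e he]; omega : 0 < e.card)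
  exact hsat.containsCopy hH hT.1 hT.2.2 hu (by omega) p₀ (hte ▸ hv)

/-- Every `r`-uniform hypergraph with chromatic number greater than `t` contains a
copy of every `r`-uniform hypertree with `t` edges. -/
theorem stmt3 {V : Type*} [Fintype V] [DecidableEq V] (r t : ℕ) (hr : 2 ≤ r) (ht : 1 ≤ t)
    (H : FinHypergraph V) (hH : H.Uniform r) (hchi : t < H.chromaticNumber)
    {W : Type*} [Fintype W] [DecidableEq W] (T : FinHypergraph W)
    (hT : T.IsHypertree) (hu : T.Uniform r) (hte : T.edges.card = t) :
    H.ContainsCopy T :=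
  stmt3_general r t hr ht H hH hchi T hT hu hte
end

section
/- Every r-uniform hypergraph with chromatic number greater than 2 contains two edges intersecting in exactly one vertex. -/
open Finset

/-!
Take a 2-colouring with an inclusion-minimal set of monochromatic edges. If some edge `e` were
monochromatic, recolour one of its vertices `x`. Every edge `f` through `x` shares with `e` a
second vertex `y` (the intersection is nonempty, so it has at least two vertices; for `f = e`
this is `2 ≤ r`), and `x`, `y` now have different colours; so the new monochromatic edges avoid
`x`, are monochromatic before the recolouring, and exclude `e`, contradicting minimality.
-/

namespace FinHypergraph

variable {V : Type*}

theorem chromaticNumber_le_of_proper (H : FinHypergraph V) {k : ℕ} {c : V → Fin k}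
    (hc : H.Proper c) : H.chromaticNumber ≤ k :=
  Nat.sInf_le ⟨c, hc⟩

def IsMonochromatic {k : ℕ} (c : V → Fin k) (e : Finset V) : Prop :=
  ∀ u ∈ e, ∀ w ∈ e, c u = c w

open Classical in
noncomputable def monochromaticEdges (H : FinHypergraph V) {k : ℕ} (c : V → Fin k) :
    Finset (Finset V) :=
  H.edges.filter (IsMonochromatic c)

theorem mem_monochromaticEdges {H : FinHypergraph V} {k : ℕ} {c : V → Fin k} {e : Finset V} :
    e ∈ H.monochromaticEdges c ↔ e ∈ H.edges ∧ IsMonochromatic c e := by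
  classical
  simp only [monochromaticEdges, mem_filter]

theorem proper_iff_monochromaticEdges_eq_empty {H : FinHypergraph V} {k : ℕ} {c : V → Fin k} :
    H.Proper c ↔ H.monochromaticEdges c = ∅ := by
  simp only [Proper, eq_empty_iff_forall_notMem, mem_monochromaticEdges, not_and]
  rfl

theorem monochromaticEdges_update_ssubset [DecidableEq V] {H : FinHypergraph V}
    (hmeet : ∀ e ∈ H.edges, ∀ f ∈ H.edges, ∀ x ∈ e ∩ f, ∃ y ∈ e ∩ f, y ≠ x)
    {c : V → Fin 2} {e : Finset V} (he : e ∈ H.monochromaticEdges c) {x : V} (hx : x ∈ e) :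
    H.monochromaticEdges (Function.update c x (c x + 1)) ⊂ H.monochromaticEdges c := by
  set c' := Function.update c x (c x + 1) with hc'
  have heE := (mem_monochromaticEdges.mp he).1
  have hemono := (mem_monochromaticEdges.mp he).2
  have hnotMem : ∀ f ∈ H.monochromaticEdges c', x ∉ f := by
    intro f hf hxf
    rw [mem_monochromaticEdges] at hf
    obtain ⟨y, hy, hyx⟩ := hmeet e heE f hf.1 x (mem_inter.mpr ⟨hx, hxf⟩)
    have hcy : c' y = c x := by
      rw [hc', Function.update_of_ne hyx]
      exact hemono y (mem_inter.mp hy).1 x hx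
    have hcx : c' x = c x + 1 := Function.update_self x _ c
    have : c x + 1 ≠ c x := by fin_omega
    exact this (hcx ▸ hcy ▸ hf.2 x hxf y (mem_inter.mp hy).2)
  have hsub : H.monochromaticEdges c' ⊆ H.monochromaticEdges c := by
    intro f hf
    have hagree : ∀ v ∈ f, c' v = c v := fun v hv =>
      Function.update_of_ne (ne_of_mem_of_not_mem hv (hnotMem f hf)) _ _
    rw [mem_monochromaticEdges] at hf ⊢
    refine ⟨hf.1, fun u hu w hw => ?_⟩
    rw [← hagree u hu, ← hagree w hw]
    exact hf.2 u hu w hw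
  exact (ssubset_iff_of_subset hsub).mpr ⟨e, he, fun he' => hnotMem e he' hx⟩

theorem exists_proper_fin_two [DecidableEq V] {H : FinHypergraph V}
    (hmeet : ∀ e ∈ H.edges, ∀ f ∈ H.edges, ∀ x ∈ e ∩ f, ∃ y ∈ e ∩ f, y ≠ x)
    (hnonempty : ∀ e ∈ H.edges, e.Nonempty) :
    ∃ c : V → Fin 2, H.Proper c := by
  let c := Function.argmin fun c : V → Fin 2 => H.monochromaticEdges c
  refine ⟨c, proper_iff_monochromaticEdges_eq_empty.mpr ?_⟩
  by_contra hne
  obtain ⟨e, he⟩ := nonempty_iff_ne_empty.mpr hne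
  obtain ⟨x, hx⟩ := hnonempty e (mem_monochromaticEdges.mp he).1
  exact Function.not_lt_argmin _ _ (monochromaticEdges_update_ssubset hmeet he hx)

theorem exists_ne_mem_inter_of_uniform [DecidableEq V] {H : FinHypergraph V} {r : ℕ}
    (hr : 2 ≤ r) (hH : H.Uniform r)
    (hsingle : ∀ e ∈ H.edges, ∀ f ∈ H.edges, e ≠ f → (e ∩ f).card ≠ 1)
    {e f : Finset V} (he : e ∈ H.edges) (hf : f ∈ H.edges) {x : V} (hx : x ∈ e ∩ f) :
    ∃ y ∈ e ∩ f, y ≠ x := by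
  refine exists_mem_ne ?_ x
  obtain rfl | hef := eq_or_ne e f
  · rw [inter_self, hH e he]
    omega
  · have := hsingle e he f hf hef
    have := card_pos.mpr ⟨x, hx⟩
    omega

end FinHypergraph

theorem stmt5_general {V : Type*} [DecidableEq V] (r : ℕ) (hr : 2 ≤ r)
    (H : FinHypergraph V) (hH : H.Uniform r) (hchi : 2 < H.chromaticNumber) :
    ∃ e ∈ H.edges, ∃ f ∈ H.edges, e ≠ f ∧ (e ∩ f).card = 1 := by
  by_contra! hsingle
  have hnonempty : ∀ e ∈ H.edges, e.Nonempty := fun e he =>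
    card_pos.mp (by rw [hH e he]; omega)
  obtain ⟨c, hc⟩ := FinHypergraph.exists_proper_fin_two
    (fun e he f hf x hx => FinHypergraph.exists_ne_mem_inter_of_uniform hr hH hsingle he hf hx)
    hnonempty
  exact (H.chromaticNumber_le_of_proper hc).not_gt hchi

/-- Every `r`-uniform hypergraph with chromatic number greater than `2` contains two
edges intersecting in exactly one vertex. -/
theorem stmt5 {V : Type*} [Fintype V] [DecidableEq V] (r : ℕ) (hr : 2 ≤ r)
    (H : FinHypergraph V) (hH : H.Uniform r) (hchi : 2 < H.chromaticNumber) :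
    ∃ e ∈ H.edges, ∃ f ∈ H.edges, e ≠ f ∧ (e ∩ f).card = 1 :=
  stmt5_general r hr H hH hchi
end

section
/- Let k ≥ 2, r ≥ 2, t ≥ 1 and set n = ⌊(k-1)/(r-1)⌋ · (r-1)t. There is a red-blue coloring of the edges of the complete r-uniform hypergraph on n vertices with no k vertices all of whose r-subsets are red and no blue copy of any r-uniform hypertree with t edges. -/
open Finset

/-!
The incidence graph of a hypergraph (vertices on one side, edges on the other) turns Berge
cycles into graph cycles, so for a connected hypergraph without Berge cycle it is a tree.
Counting its vertices and edges shows that an `r`-tree with `t` edges has `(r - 1) t + 1`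
vertices. Colour an `r`-set blue when it lies inside one block of `(r - 1) t` consecutive
vertices. A blue tree is connected, hence lies inside a single block, which is too small.
A red `K_k` is impossible by pigeonhole: `k` vertices in `⌊(k-1)/(r-1)⌋` blocks put `r` of
them into one block.
-/

open SimpleGraph

namespace FinHypergraph

variable {V : Type*} {H : FinHypergraph V}

lemma Connected.apply_eq_of_adj {α : Type*} {f : V → α} (hH : H.Connected)
    (hf : ∀ u w, H.adj u w → f u = f w) (u w : V) : f u = f w := by
  induction hH u w with
  | refl => rfl
  | tail _ hadj ih => exact ih.trans (hf _ _ hadj)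

def incidenceGraph (H : FinHypergraph V) : SimpleGraph (V ⊕ H.edges) where
  Adj
    | .inl v, .inr e | .inr e, .inl v => v ∈ e.1
    | _, _ => False
  symm := ⟨by rintro (v | e) (w | f) <;> simp⟩
  loopless := ⟨by rintro (v | e) <;> simp⟩

@[simp]
lemma incidenceGraph_adj_inl_inr {v : V} {e : H.edges} :
    H.incidenceGraph.Adj (.inl v) (.inr e) ↔ v ∈ e.1 := Iff.rfl

@[simp]
lemma incidenceGraph_adj_inr_inl {v : V} {e : H.edges} :
    H.incidenceGraph.Adj (.inr e) (.inl v) ↔ v ∈ e.1 := Iff.rfl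

lemma isLeft_eq_not_of_incidenceGraph_adj {a b : V ⊕ H.edges} (h : H.incidenceGraph.Adj a b) :
    b.isLeft = !a.isLeft := by
  rcases a with _ | _ <;> rcases b with _ | _ <;> first | rfl | exact h.elim

lemma isLeft_getVert_iff_even {v : V} {b : V ⊕ H.edges} (p : H.incidenceGraph.Walk (.inl v) b)
    {i : ℕ} (hi : i ≤ p.length) : (p.getVert i).isLeft ↔ Even i := by
  induction i with
  | zero => simp
  | succ i ih =>
    rw [isLeft_eq_not_of_incidenceGraph_adj (p.adj_getVert_succ (by omega)),
      Nat.even_add_one, ← ih (by omega)]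
    simp

lemma hasBergeCycle_of_isCycle {v₀ : V} {c : H.incidenceGraph.Walk (.inl v₀) (.inl v₀)}
    (hc : c.IsCycle) : H.HasBergeCycle := by
  have hpar {i : ℕ} (hi : i ≤ c.length) := isLeft_getVert_iff_even c hi
  obtain ⟨m, hm⟩ : Even c.length := (hpar le_rfl).mp (by simp)
  have hm2 : 2 ≤ m := by have := hc.three_le_length; omega
  have hv (i : Fin m) : ∃ v, c.getVert (2 * i) = .inl v :=
    Sum.isLeft_iff.mp ((hpar (by omega)).mpr (even_two_mul _))
  have he (i : Fin m) : ∃ e, c.getVert (2 * i + 1) = .inr e :=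
    Sum.isRight_iff.mp (Sum.not_isLeft.mp fun h ↦
      Nat.not_even_two_mul_add_one _ ((hpar (by omega)).mp h))
  choose v hv using hv
  choose e he using he
  -- vertex `i + 1` of the Berge cycle sits at position `2 i + 2`, the last one back at `0`
  have hnext (i : Fin m) :
      c.getVert (2 * i + 1 + 1) = .inl (v ⟨(i + 1) % m, Nat.mod_lt _ (by omega)⟩) := by
    rw [← hv]
    dsimp only
    rcases Nat.lt_or_ge (i + 1) m with hlt | hge
    · rw [Nat.mod_eq_of_lt hlt, mul_add_one]
    · rw [show (i : ℕ) + 1 = m by omega, Nat.mod_self, mul_zero, c.getVert_zero,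
        show 2 * (i : ℕ) + 1 + 1 = c.length by omega, c.getVert_length]
  have hinj {i j : ℕ} (hi : i ≤ c.length - 1) (hj : j ≤ c.length - 1)
      (h : c.getVert i = c.getVert j) : i = j := hc.getVert_injOn' hi hj h
  refine ⟨m, hm2, v, fun i ↦ (e i).1, fun i j hij ↦ ?_, fun i j hij ↦ ?_, fun i ↦ (e i).2,
    fun i ↦ ⟨?_, ?_⟩⟩
  · exact Fin.ext (by have := hinj (by omega) (by omega) ((hv i).trans (hij ▸ hv j).symm); omega)
  · have := hinj (by omega) (by omega) ((he i).trans ((Subtype.ext hij : e i = e j) ▸ he j).symm)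
    exact Fin.ext (by omega)
  · simpa [hv, he] using c.adj_getVert_succ (i := 2 * i) (by omega)
  · simpa [he, hnext] using c.adj_getVert_succ (i := 2 * i + 1) (by omega)

lemma isAcyclic_incidenceGraph (hH : ¬ H.HasBergeCycle) : H.incidenceGraph.IsAcyclic := by
  classical
  rintro (v | e) c hc
  · exact hH (hasBergeCycle_of_isCycle hc)
  · obtain ⟨v, hv⟩ : ∃ v, c.getVert 1 = .inl v := by
      have hadj : H.incidenceGraph.Adj (.inr e) (c.getVert 1) := by
        simpa using c.adj_getVert_succ (i := 0) (by have := hc.three_le_length; omega)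
      rcases h : c.getVert 1 with v | f
      · exact ⟨v, rfl⟩
      · rw [h] at hadj
        exact hadj.elim
    have hmem : Sum.inl v ∈ c.support :=
      Walk.mem_support_iff_exists_getVert.mpr ⟨1, hv, by have := hc.three_le_length; omega⟩
    exact hH (hasBergeCycle_of_isCycle (hc.rotate hmem))

lemma reachable_incidenceGraph_of_reflTransGen {u w : V} (h : Relation.ReflTransGen H.adj u w) :
    H.incidenceGraph.Reachable (.inl u) (.inl w) := by
  induction h with
  | refl => rfl
  | @tail b c _ hadj ih =>
    obtain ⟨e, he, hb, hc⟩ := hadj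
    exact ih.trans ((show H.incidenceGraph.Adj (.inl b) (.inr ⟨e, he⟩) from hb).reachable.trans
      (show H.incidenceGraph.Adj (.inr ⟨e, he⟩) (.inl c) from hc).reachable)

lemma connected_incidenceGraph (hH : H.Connected) (hne : ∀ e ∈ H.edges, e.Nonempty)
    (hE : H.edges.Nonempty) : H.incidenceGraph.Connected := by
  have toInl (a : V ⊕ H.edges) : ∃ w, H.incidenceGraph.Reachable a (.inl w) := by
    rcases a with w | e
    · exact ⟨w, .rfl⟩
    · obtain ⟨w, hw⟩ := hne e.1 e.2
      exact ⟨w, (show H.incidenceGraph.Adj (.inr e) (.inl w) from hw).reachable⟩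
  have : Nonempty (V ⊕ H.edges) := ⟨.inr ⟨_, hE.choose_spec⟩⟩
  refine .mk fun a b ↦ ?_
  obtain ⟨wa, ha⟩ := toInl a
  obtain ⟨wb, hb⟩ := toInl b
  exact ha.trans ((reachable_incidenceGraph_of_reflTransGen (hH wa wb)).trans hb.symm)

lemma card_edgeFinset_incidenceGraph [Fintype H.incidenceGraph.edgeSet] :
    #H.incidenceGraph.edgeFinset = ∑ e ∈ H.edges, #e := by
  rw [← Finset.sum_attach H.edges, ← card_sigma]
  symm
  refine card_bij (fun p _ ↦ s(.inl p.2, .inr p.1)) (fun p hp ↦ ?_) ?_ ?_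
  · simpa using (mem_sigma.mp hp).2
  · rintro ⟨e, v⟩ _ ⟨f, w⟩ _ h
    simp only [Sym2.eq, Sym2.rel_iff', Prod.mk.injEq, Sum.inl.injEq, Sum.inr.injEq,
      Prod.swap_prod_mk, reduceCtorEq, and_false, or_false] at h
    obtain ⟨rfl, rfl⟩ := h
    rfl
  · intro s hs
    induction s using Sym2.ind with
    | _ a b =>
      rw [mem_edgeFinset, mem_edgeSet] at hs
      rcases a with v | e <;> rcases b with w | f
      · exact hs.elim
      · exact ⟨⟨f, v⟩, mem_sigma.mpr ⟨mem_attach _ _, hs⟩, rfl⟩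
      · exact ⟨⟨e, w⟩, mem_sigma.mpr ⟨mem_attach _ _, hs⟩, Sym2.eq_swap⟩
      · exact hs.elim

lemma card_add_card_edges [Fintype V] (hH : H.Connected) (hB : ¬ H.HasBergeCycle)
    (hne : ∀ e ∈ H.edges, e.Nonempty) (hE : H.edges.Nonempty) :
    Fintype.card V + #H.edges = ∑ e ∈ H.edges, #e + 1 := by
  classical
  have htree : H.incidenceGraph.IsTree :=
    ⟨connected_incidenceGraph hH hne hE, isAcyclic_incidenceGraph hB⟩
  have := htree.card_edgeFinset
  rw [card_edgeFinset_incidenceGraph, Fintype.card_sum, Fintype.card_coe] at this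
  omega

lemma IsHypertree.card_eq [DecidableEq V] [Fintype V] {r : ℕ} (hH : H.IsHypertree)
    (hu : H.Uniform r) (hr : 0 < r) (hE : H.edges.Nonempty) :
    Fintype.card V = (r - 1) * #H.edges + 1 := by
  have hne (e) (he : e ∈ H.edges) : e.Nonempty := card_pos.mp (hu e he ▸ hr)
  have := card_add_card_edges hH.1 hH.2.2 hne hE
  rw [sum_congr rfl hu, sum_const, smul_eq_mul] at this
  obtain ⟨r, rfl⟩ := Nat.exists_eq_add_one_of_ne_zero hr.ne'
  simp only [add_tsub_cancel_right]
  linarith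

end FinHypergraph

/-- Red (`true`) iff the set meets two of the blocks `[b m, b m + m)` of `Fin n`. -/
def blockColoring {n : ℕ} (m : ℕ) (e : Finset (Fin n)) : Bool :=
  decide (∃ u ∈ e, ∃ v ∈ e, u.val / m ≠ v.val / m)

lemma blockColoring_eq_false_iff {n m : ℕ} {e : Finset (Fin n)} :
    blockColoring m e = false ↔ ∀ u ∈ e, ∀ v ∈ e, u.val / m = v.val / m := by
  simp [blockColoring]

lemma exists_subset_blockColoring_eq_false {n m q r : ℕ} (hn : n ≤ q * m) {S : Finset (Fin n)}
    (hS : q * (r - 1) < #S) : ∃ e ⊆ S, #e = r ∧ blockColoring m e = false := by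
  have hmaps (v : Fin n) (_ : v ∈ S) : v.val / m ∈ range q :=
    mem_range.mpr (Nat.div_lt_of_lt_mul (by have := v.2; rw [mul_comm]; omega))
  obtain ⟨b, -, hb⟩ := exists_lt_card_fiber_of_mul_lt_card_of_maps_to hmaps
    (by rwa [card_range])
  obtain ⟨e, heS, he⟩ := exists_subset_card_eq (show r ≤ #{v ∈ S | v.val / m = b} by omega)
  refine ⟨e, heS.trans (filter_subset _ _), he, blockColoring_eq_false_iff.mpr ?_⟩
  intro u hu v hv
  exact (mem_filter.mp (heS hu)).2.trans (mem_filter.mp (heS hv)).2.symm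

lemma card_le_of_blockColoring_eq_false {W : Type*} [Fintype W]
    {T : FinHypergraph W} (hT : T.Connected) {n m : ℕ} (hm : 0 < m) {φ : W → Fin n}
    (hφ : Function.Injective φ)
    (hblue : ∀ e ∈ T.edges, blockColoring m (e.image φ) = false) :
    Fintype.card W ≤ m := by
  have hblock : ∀ u w, (φ u).val / m = (φ w).val / m := by
    refine hT.apply_eq_of_adj fun u w ⟨e, he, hu, hw⟩ ↦ ?_
    exact blockColoring_eq_false_iff.mp (hblue e he) _ (mem_image_of_mem φ hu) _
      (mem_image_of_mem φ hw)
  have hmod : Function.Injective fun w ↦ (⟨(φ w).val % m, Nat.mod_lt _ hm⟩ : Fin m) :=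
    fun u w h ↦ hφ <| Fin.ext <| by
      rw [← Nat.div_add_mod (φ u).val m, ← Nat.div_add_mod (φ w).val m, hblock u w,
        Fin.mk.inj h]
  simpa using Fintype.card_le_of_injective _ hmod

/-- With `n = ⌊(k-1)/(r-1)⌋·(r-1)t`, there is a red-blue coloring (`true` = red,
`false` = blue) of the `r`-subsets of an `n`-set with no red `K_k^{(r)}` and no blue
copy of any `r`-tree with `t` edges. -/
theorem stmt9 (k r t : ℕ) (hk : 2 ≤ k) (hr : 2 ≤ r) (ht : 1 ≤ t) :
    ∃ col : Finset (Fin (((k - 1) / (r - 1)) * ((r - 1) * t))) → Bool,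
      (¬ ∃ S : Finset (Fin (((k - 1) / (r - 1)) * ((r - 1) * t))), S.card = k ∧
          ∀ e ⊆ S, e.card = r → col e = true) ∧
      ∀ (W : Type) [Fintype W] [DecidableEq W] (T : FinHypergraph W),
        T.IsHypertree → T.Uniform r → T.edges.card = t →
        ¬ ∃ φ : W → Fin (((k - 1) / (r - 1)) * ((r - 1) * t)),
            Function.Injective φ ∧ ∀ e ∈ T.edges, col (e.image φ) = false := by
  have hm : 0 < (r - 1) * t := Nat.mul_pos (by omega) ht
  refine ⟨blockColoring ((r - 1) * t), ?_, ?_⟩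
  · rintro ⟨S, hS, hred⟩
    have hq : (k - 1) / (r - 1) * (r - 1) < #S := by
      have := Nat.div_mul_le_self (k - 1) (r - 1)
      omega
    obtain ⟨e, heS, her, hblue⟩ := exists_subset_blockColoring_eq_false le_rfl hq
    simp [hred e heS her] at hblue
  · rintro W _ _ T hT hu rfl ⟨φ, hφ, hblue⟩
    have hcard := hT.card_eq hu (by omega) (card_pos.mp ht)
    have := card_le_of_blockColoring_eq_false hT.1 hm hφ hblue
    omega
end

section
/- For every n ≥ 4 there is a 3-uniform hypergraph on n vertices in which every vertex has degree at least n-2 that contains no loose path with 3 edges. -/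
open Finset

/-- For every `n ≥ 4` there is a `3`-uniform hypergraph on `n` vertices in which every
vertex has degree at least `n - 2`, containing no loose path with `3` edges. -/
theorem stmt11 (n : ℕ) (hn : 4 ≤ n) :
    ∃ H : FinHypergraph (Fin n), H.Uniform 3 ∧
      (∀ v : Fin n, n - 2 ≤ (H.edges.filter fun e => v ∈ e).card) ∧
      ¬ ∃ f₁ ∈ H.edges, ∃ f₂ ∈ H.edges, ∃ f₃ ∈ H.edges,
          (f₁ ∩ f₂).card = 1 ∧ (f₂ ∩ f₃).card = 1 ∧ f₁ ∩ f₃ = ∅ := by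
  classical
  haveI : NeZero n := ⟨by omega⟩
  refine ⟨⟨(Finset.univ.powersetCard 3).filter (fun e => (0 : Fin n) ∈ e)⟩, ?_, ?_, ?_⟩
  · intro e he
    simp only [Finset.mem_filter, Finset.mem_powersetCard] at he
    exact he.1.2
  · intro v
    have h1v : ((1 : Fin n) : ℕ) = 1 := by
      rw [Fin.val_one']; exact Nat.mod_eq_of_lt (by omega)
    have hne : (1 : Fin n) ≠ 0 := by
      intro h
      have := congrArg Fin.val h
      rw [h1v, Fin.val_zero] at this
      exact one_ne_zero this
    set b : Fin n := if v = 0 then 1 else v with hb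
    have hb0 : b ≠ 0 := by
      rw [hb]; split_ifs with h
      · exact hne
      · exact h
    have key : ((Finset.univ.erase b).erase 0).card ≤
        (((Finset.univ.powersetCard 3).filter (fun e => (0 : Fin n) ∈ e)).filter
          (fun e => v ∈ e)).card := by
      apply Finset.card_le_card_of_injOn (fun w => ({0, b, w} : Finset (Fin n)))
      · intro w hw
        simp only [Finset.mem_coe, Finset.mem_erase, Finset.mem_univ, and_true] at hw
        obtain ⟨hw0, hwb⟩ := hw
        have hcard : ({0, b, w} : Finset (Fin n)).card = 3 := by
          rw [Finset.card_insert_of_notMem (by simp [hb0.symm, hw0.symm]),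
            Finset.card_insert_of_notMem (by simpa using hwb.symm)]
          simp
        simp only [Finset.mem_coe, Finset.mem_filter, Finset.mem_powersetCard]
        refine ⟨⟨⟨Finset.subset_univ _, hcard⟩, by simp⟩, ?_⟩
        by_cases h : v = 0
        · rw [h]; exact Finset.mem_insert_self _ _
        · have hbv : b = v := by rw [hb, if_neg h]
          rw [← hbv]; simp
      · intro w1 h1 w2 h2 heq
        simp at h1 h2
        simp only at heq
        have : w1 ∈ ({0, b, w2} : Finset (Fin n)) := by
          rw [← heq]; simp
        simp only [Finset.mem_insert, Finset.mem_singleton] at this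
        rcases this with h|h|h
        · exact absurd h h1.2
        · exact absurd h h1.1
        · exact h
    have hcard2 : ((Finset.univ.erase b).erase 0).card = n - 2 := by
      rw [Finset.card_erase_of_mem (by simp [Finset.mem_erase, hb0.symm]),
        Finset.card_erase_of_mem (Finset.mem_univ b)]
      rw [Finset.card_univ, Fintype.card_fin]; omega
    exact hcard2 ▸ key
  · rintro ⟨f1, h1, f2, h2, f3, h3, _, _, hempty⟩
    simp only [Finset.mem_filter] at h1 h3
    have : (0 : Fin n) ∈ f1 ∩ f3 := Finset.mem_inter.2 ⟨h1.2, h3.2⟩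
    rw [hempty] at this
    exact absurd this (Finset.notMem_empty 0)
end

section
/- If H is an r-uniform hypergraph, e* an edge of H, and H - e* (same vertex set, edge e* deleted) has a proper t-coloring, and H contains no copy of a fixed r-tree T with t edges, then H itself has a proper t-coloring. -/
open Finset

/-!
Among the proper `t`-colourings of `H - e*` choose one, `c`, maximising `∑ v, c v`. If `e*` is
not monochromatic, `c` is proper on `H`; otherwise let `a` be the colour of `e*` and
`b₁ < ⋯ < b_{t-1}` the other colours. A hypertree has an edge ordering in which every edge meets
the earlier ones in exactly one vertex (two such vertices would close a Berge cycle). Embed the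
first edge of `T` onto `e*` and the `j`-th further edge onto an edge of `H` through the image `x`
of its attachment vertex whose other vertices all have colour `b_j`. Such an edge exists: otherwise
recolouring `x` with `b_j` keeps `H - e*` proper and either makes `H` proper (if `x ∈ e*`) or
increases the colour sum (as then `x` has colour `b_i` with `i < j`). Vertices added at different
steps have different colours, so the embedding is injective and `H` contains a copy of `T`.
-/
lemma Set.InjOn.exists_extend_finset {α β : Type*} [DecidableEq α] [DecidableEq β] [Nonempty β]
    {φ : α → β} {A D : Finset α} {E : Finset β} (hφ : Set.InjOn φ A) (hAD : Disjoint A D)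
    (hE : ∀ a ∈ A, φ a ∉ E) (hcard : D.card = E.card) :
    ∃ ψ : α → β, (∀ a ∈ A, ψ a = φ a) ∧ Set.InjOn ψ ↑(A ∪ D) ∧ D.image ψ = E := by
  obtain ⟨f, hf⟩ := D.finite_toSet.exists_bijOn_of_encard_eq (t := (E : Set β)) (by simp [hcard])
  have hψA : ∀ a ∈ A, D.piecewise f φ a = φ a := fun a ha =>
    D.piecewise_eq_of_notMem _ _ (Finset.disjoint_left.1 hAD ha)
  refine ⟨D.piecewise f φ, hψA, ?_, ?_⟩
  · rw [Finset.coe_union, Set.injOn_union (Finset.disjoint_coe.2 hAD)]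
    refine ⟨hφ.congr fun a ha => (hψA a ha).symm, hf.injOn.congr fun d hd => ?_, ?_⟩
    · exact (D.piecewise_eq_of_mem _ _ hd).symm
    · intro a ha d hd h
      rw [hψA a ha, D.piecewise_eq_of_mem _ _ hd] at h
      exact hE a ha (h ▸ hf.mapsTo hd)
  · apply Finset.coe_injective
    rw [Finset.coe_image, ← hf.image_eq]
    exact Set.image_congr fun d hd => D.piecewise_eq_of_mem _ _ hd

namespace FinHypergraph

section Hypertree

variable {W : Type*}

structure IsBergePath (S : Finset (Finset W)) {n : ℕ} (v : Fin (n + 1) → W)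
    (e : Fin n → Finset W) : Prop where
  injective_vert : Function.Injective v
  injective_edge : Function.Injective e
  edge_mem : ∀ i, e i ∈ S
  mem_edge : ∀ i, v i.castSucc ∈ e i ∧ v i.succ ∈ e i

namespace IsBergePath

variable {S : Finset (Finset W)} {n : ℕ} {v : Fin (n + 1) → W} {e : Fin n → Finset W}

lemma pair {f : Finset W} {a b : W} (hf : f ∈ S) (ha : a ∈ f) (hb : b ∈ f) (hab : a ≠ b) :
    IsBergePath S ![a, b] ![f] where
  injective_vert i j := by fin_cases i <;> fin_cases j <;> simp [hab, hab.symm]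
  injective_edge := Function.injective_of_subsingleton _
  edge_mem i := by fin_cases i; exact hf
  mem_edge i := by fin_cases i; exact ⟨ha, hb⟩

lemma reverse (h : IsBergePath S v e) : IsBergePath S (v ∘ Fin.rev) (e ∘ Fin.rev) where
  injective_vert := h.injective_vert.comp Fin.rev_injective
  injective_edge := h.injective_edge.comp Fin.rev_injective
  edge_mem i := h.edge_mem _
  mem_edge i := by
    simpa only [Function.comp, Fin.rev_castSucc, Fin.rev_succ] using (h.mem_edge i.rev).symm

lemma mono (h : IsBergePath S v e) {S' : Finset (Finset W)} (hS : S ⊆ S') :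
    IsBergePath S' v e :=
  ⟨h.injective_vert, h.injective_edge, fun i => hS (h.edge_mem i), h.mem_edge⟩

lemma cons (h : IsBergePath S v e) {f : Finset W} {b : W} (hf : f ∈ S) (hfe : f ∉ Set.range e)
    (hb : b ∉ Set.range v) (hbf : b ∈ f) (hvf : v 0 ∈ f) :
    IsBergePath S (Fin.cons b v : Fin (n + 2) → W) (Fin.cons f e : Fin (n + 1) → Finset W) where
  injective_vert := Fin.cons_injective_of_injective hb h.injective_vert
  injective_edge := Fin.cons_injective_of_injective hfe h.injective_edge
  edge_mem i := by cases i using Fin.cases <;> simp [hf, h.edge_mem]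
  mem_edge i := by
    cases i using Fin.cases with
    | zero => exact ⟨hbf, hvf⟩
    | succ j => simpa [← Fin.succ_castSucc] using h.mem_edge j

lemma hasBergeCycle {T : FinHypergraph W} (h : IsBergePath S v e) (hS : S ⊆ T.edges)
    (hn : n ≠ 0) {f : Finset W} (hf : f ∈ T.edges) (hfS : f ∉ S) (h0 : v 0 ∈ f)
    (hlast : v (Fin.last n) ∈ f) : T.HasBergeCycle := by
  refine ⟨n + 1, by omega, v, Fin.snoc e f, h.injective_vert,
    Fin.snoc_injective_of_injective h.injective_edge ?_, fun i => ?_, fun i => ?_⟩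
  · rintro ⟨i, rfl⟩
    exact hfS (h.edge_mem i)
  · cases i using Fin.lastCases <;> simp [hf, hS (h.edge_mem _)]
  · cases i using Fin.lastCases with
    | last =>
      have : (⟨(n + 1) % (n + 1), Nat.mod_lt _ (by omega)⟩ : Fin (n + 1)) = 0 := by ext; simp
      simpa [this] using ⟨hlast, h0⟩
    | cast j =>
      have : (⟨(j + 1) % (n + 1), Nat.mod_lt _ (by omega)⟩ : Fin (n + 1)) = j.succ := by
        ext; simp [Nat.mod_eq_of_lt (by omega : (j : ℕ) + 1 < n + 1)]
      simpa [this] using h.mem_edge j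

variable [DecidableEq W]

lemma vert_mem_sup (h : IsBergePath S v e) (hn : n ≠ 0) (i : Fin (n + 1)) : v i ∈ S.sup id := by
  obtain ⟨n, rfl⟩ := Nat.exists_eq_succ_of_ne_zero hn
  cases i using Fin.lastCases with
  | last => exact Finset.mem_sup.2 ⟨_, h.edge_mem (Fin.last n), by
      simpa [Fin.succ_last] using (h.mem_edge (Fin.last n)).2⟩
  | cast j => exact Finset.mem_sup.2 ⟨_, h.edge_mem j, (h.mem_edge j).1⟩

end IsBergePath

variable [DecidableEq W]

inductive IsTreeFamily : Finset (Finset W) → Prop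
  | single (e : Finset W) : IsTreeFamily {e}
  | attach {S : Finset (Finset W)} {e : Finset W} {z : W} :
      IsTreeFamily S → e ∉ S → e ∩ S.sup id = {z} → IsTreeFamily (insert e S)

variable {S : Finset (Finset W)}

namespace IsTreeFamily

lemma nonempty (hS : IsTreeFamily S) : S.Nonempty := by
  cases hS with
  | single e => exact Finset.singleton_nonempty e
  | attach => exact Finset.insert_nonempty _ _

lemma exists_bergePath (hS : IsTreeFamily S) {u w : W} (hu : u ∈ S.sup id)
    (hw : w ∈ S.sup id) (huw : u ≠ w) :
    ∃ (n : ℕ) (v : Fin (n + 1) → W) (e : Fin n → Finset W),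
      IsBergePath S v e ∧ v 0 = u ∧ v (Fin.last n) = w := by
  induction hS generalizing u w with
  | single f =>
    simp only [Finset.sup_singleton, id] at hu hw
    exact ⟨1, ![u, w], ![f], .pair (Finset.mem_singleton_self f) hu hw huw, rfl, rfl⟩
  | @attach S f z _ hfS hz ih =>
    have hzf : z ∈ f ∧ z ∈ S.sup id := Finset.mem_inter.1 (hz ▸ Finset.mem_singleton_self z)
    have hsup : ∀ {x}, x ∈ (insert f S).sup id ↔ x ∈ f ∨ x ∈ S.sup id := by
      simp [Finset.sup_insert]
    -- A path from a vertex `a` new to `f` goes through `z`, the only old vertex of `f`.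
    have from_new : ∀ {a b : W}, a ∈ f → a ∉ S.sup id → b ∈ (insert f S).sup id → a ≠ b →
        ∃ (n : ℕ) (v : Fin (n + 1) → W) (e : Fin n → Finset W),
          IsBergePath (insert f S) v e ∧ v 0 = a ∧ v (Fin.last n) = b := by
      intro a b ha haS hb hab
      by_cases hbf : b ∈ f
      · exact ⟨1, ![a, b], ![f], .pair (Finset.mem_insert_self f S) ha hbf hab, rfl, rfl⟩
      have hbS : b ∈ S.sup id := (hsup.1 hb).resolve_left hbf
      have hzb : z ≠ b := fun h => hbf (h ▸ hzf.1)
      obtain ⟨n, v, e, hp, hv0, hvn⟩ := ih hzf.2 hbS hzb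
      have hn : n ≠ 0 := by
        rintro rfl
        exact hzb (hv0.symm.trans hvn)
      refine ⟨n + 1, Fin.cons a v, Fin.cons f e, ?_, rfl, by simpa [← Fin.succ_last] using hvn⟩
      refine (hp.mono (Finset.subset_insert f S)).cons (Finset.mem_insert_self f S) ?_ ?_ ha
        (hv0 ▸ hzf.1)
      · rintro ⟨i, hi⟩
        exact hfS (hi ▸ hp.edge_mem i)
      · rintro ⟨i, hi⟩
        exact haS (hi ▸ hp.vert_mem_sup hn i)
    by_cases huS : u ∈ S.sup id
    · by_cases hwS : w ∈ S.sup id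
      · obtain ⟨n, v, e, hp, hv0, hvn⟩ := ih huS hwS huw
        exact ⟨n, v, e, hp.mono (Finset.subset_insert f S), hv0, hvn⟩
      · obtain ⟨n, v, e, hp, hv0, hvn⟩ :=
          from_new ((hsup.1 hw).resolve_right hwS) hwS hu huw.symm
        exact ⟨n, v ∘ Fin.rev, e ∘ Fin.rev, hp.reverse, by simpa using hvn, by simpa using hv0⟩
    · exact from_new ((hsup.1 hu).resolve_right huS) huS hw huw

lemma exists_attach {T : FinHypergraph W} (hT : T.Connected) (hcyc : ¬ T.HasBergeCycle)
    (hne : ∀ e ∈ T.edges, e.Nonempty) (hS : IsTreeFamily S) (hST : S ⊆ T.edges)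
    (hST' : S ≠ T.edges) : ∃ e ∈ T.edges, e ∉ S ∧ ∃ z, e ∩ S.sup id = {z} := by
  obtain ⟨f, hfT, hfS⟩ := Finset.exists_of_ssubset (Finset.ssubset_iff_subset_ne.2 ⟨hST, hST'⟩)
  have hmeet : ∃ e ∈ T.edges, e ∉ S ∧ (e ∩ S.sup id).Nonempty := by
    by_contra! hdisj
    -- Otherwise the support of `S` is closed under adjacency, so it contains every vertex.
    have hclosed : ∀ a b, T.adj a b → a ∈ S.sup id → b ∈ S.sup id := by
      rintro a b ⟨e, heT, hae, hbe⟩ ha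
      by_cases heS : e ∈ S
      · exact Finset.mem_sup.2 ⟨e, heS, hbe⟩
      · have hae' := Finset.mem_inter.2 ⟨hae, ha⟩
        rw [hdisj e heT heS] at hae'
        exact absurd hae' (Finset.notMem_empty a)
    obtain ⟨e₀, he₀⟩ := hS.nonempty
    obtain ⟨u, hu⟩ := hne e₀ (hST he₀)
    obtain ⟨w, hw⟩ := hne f hfT
    have hwS : ∀ x, Relation.ReflTransGen T.adj u x → x ∈ S.sup id := by
      intro x hx
      induction hx with
      | refl => exact Finset.mem_sup.2 ⟨e₀, he₀, hu⟩
      | tail _ hab ih => exact hclosed _ _ hab ih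
    exact Finset.nonempty_iff_ne_empty.1 ⟨w, Finset.mem_inter.2 ⟨hw, hwS w (hT u w)⟩⟩
      (hdisj f hfT hfS)
  obtain ⟨e, heT, heS, hmeet⟩ := hmeet
  refine ⟨e, heT, heS, Finset.card_eq_one.1 (le_antisymm ?_ hmeet.card_pos)⟩
  by_contra! htwo
  obtain ⟨u, hu, w, hw, huw⟩ := Finset.one_lt_card.1 htwo
  obtain ⟨hue, huS⟩ := Finset.mem_inter.1 hu
  obtain ⟨hwe, hwS⟩ := Finset.mem_inter.1 hw
  obtain ⟨n, v, p, hp, hv0, hvn⟩ := hS.exists_bergePath huS hwS huw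
  have hn : n ≠ 0 := by
    rintro rfl
    exact huw (hv0.symm.trans hvn)
  exact hcyc (hp.hasBergeCycle hST hn heT heS (hv0 ▸ hue) (hvn ▸ hwe))

end IsTreeFamily

lemma IsHypertree.isTreeFamily_edges {T : FinHypergraph W} (hT : T.IsHypertree)
    (hne : ∀ e ∈ T.edges, e.Nonempty) (hT₀ : T.edges.Nonempty) : IsTreeFamily T.edges := by
  classical
  obtain ⟨e, he⟩ := hT₀
  obtain ⟨S, hS, hmax⟩ := Finset.exists_max_image (T.edges.powerset.filter IsTreeFamily)
    Finset.card ⟨{e}, by simpa using ⟨he, IsTreeFamily.single e⟩⟩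
  simp only [Finset.mem_filter, Finset.mem_powerset] at hS hmax
  by_contra hST
  obtain ⟨f, hfT, hfS, z, hz⟩ := hS.2.exists_attach hT.1 hT.2.2 hne hS.1 (fun h => hST (h ▸ hS.2))
  have := hmax (insert f S) ⟨Finset.insert_subset hfT hS.1, hS.2.attach hfS hz⟩
  rw [Finset.card_insert_of_notMem hfS] at this
  omega

lemma Connected.mem_sup_edges {T : FinHypergraph W} (hT : T.Connected) {e₀ : Finset W}
    (he₀ : e₀ ∈ T.edges) (hne : e₀.Nonempty) (w : W) : w ∈ T.edges.sup id := by
  obtain ⟨u, hu⟩ := hne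
  rcases (hT w u).cases_head with rfl | ⟨_, ⟨e, he, hwe, -⟩, -⟩
  · exact Finset.mem_sup.2 ⟨e₀, he₀, hu⟩
  · exact Finset.mem_sup.2 ⟨e, he, hwe⟩

lemma sup_insert_eq_union_erase {f : Finset W} {z : W}
    (hz : f ∩ S.sup id = {z}) : (insert f S).sup id = S.sup id ∪ f.erase z := by
  have hzS : z ∈ S.sup id := (Finset.mem_inter.1 (hz ▸ Finset.mem_singleton_self z)).2
  ext w
  by_cases hwz : w = z
  · subst hwz
    simp [hzS]
  · simp [Finset.sup_insert, hwz, or_comm]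

end Hypertree

section Colouring

variable {V : Type*} [DecidableEq V]

def deleteEdge (H : FinHypergraph V) (e : Finset V) : FinHypergraph V := ⟨H.edges.erase e⟩

lemma Proper.of_deleteEdge {H : FinHypergraph V} {k : ℕ} {c : V → Fin k} {e : Finset V}
    (hc : (H.deleteEdge e).Proper c) (he : ¬ ∀ u ∈ e, ∀ w ∈ e, c u = c w) : H.Proper c := by
  intro f hf
  by_cases hfe : f = e
  · exact hfe ▸ he
  · exact hc f (Finset.mem_erase.2 ⟨hfe, hf⟩)

lemma proper_update {H : FinHypergraph V} {k : ℕ} {c : V → Fin k} {x : V} {b : Fin k}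
    (hc : ∀ e ∈ H.edges, x ∉ e → ¬ ∀ u ∈ e, ∀ w ∈ e, c u = c w)
    (hx : ∀ e ∈ H.edges, x ∈ e → ∃ y ∈ e, y ≠ x ∧ c y ≠ b) :
    H.Proper (Function.update c x b) := by
  intro e he hmono
  by_cases hxe : x ∈ e
  · obtain ⟨y, hye, hyx, hcy⟩ := hx e he hxe
    exact hcy (by simpa [hyx] using hmono y hye x hxe)
  · refine hc e he hxe fun u hu w hw => ?_
    have hux : u ≠ x := fun h => hxe (h ▸ hu)
    have hwx : w ≠ x := fun h => hxe (h ▸ hw)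
    simpa [hux, hwx] using hmono u hu w hw

variable [Fintype V] {k : ℕ}

lemma sum_val_lt_sum_val_update {c : V → Fin k} {x : V} {b : Fin k} (h : c x < b) :
    ∑ v, (c v : ℕ) < ∑ v, (Function.update c x b v : ℕ) := by
  refine Finset.sum_lt_sum (fun v _ => ?_) ⟨x, Finset.mem_univ x, by simpa using h⟩
  by_cases hv : v = x
  · subst hv
    simpa using h.le
  · simp [hv]

lemma exists_proper_deleteEdge_isMax {H : FinHypergraph V} {e : Finset V} {c : V → Fin k}
    (hc : (H.deleteEdge e).Proper c) :
    ∃ c₀ : V → Fin k, (H.deleteEdge e).Proper c₀ ∧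
      ∀ c' : V → Fin k, (H.deleteEdge e).Proper c' → ∑ v, (c' v : ℕ) ≤ ∑ v, (c₀ v : ℕ) := by
  classical
  obtain ⟨c₀, hc₀, hmax⟩ := Finset.exists_max_image
    (Finset.univ.filter fun c' : V → Fin k => (H.deleteEdge e).Proper c')
    (fun c' => ∑ v, (c' v : ℕ)) ⟨c, by simpa using hc⟩
  exact ⟨c₀, by simpa using hc₀, fun c' hc' => hmax c' (by simpa using hc')⟩

lemma exists_blocking_edge {H : FinHypergraph V} {estar : Finset V} {c : V → Fin k}
    (hc : (H.deleteEdge estar).Proper c)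
    (hmax : ∀ c' : V → Fin k, (H.deleteEdge estar).Proper c' →
      ∑ v, (c' v : ℕ) ≤ ∑ v, (c v : ℕ))
    (hno : ∀ c' : V → Fin k, ¬ H.Proper c') {x : V} {b : Fin k} (hx : x ∈ estar ∨ c x < b) :
    ∃ e ∈ H.edges, x ∈ e ∧ ∀ y ∈ e, y ≠ x → c y = b := by
  by_contra! hblock
  rcases hx with hx | hx
  · refine hno _ (proper_update (fun e he hxe => hc e ?_) hblock)
    exact Finset.mem_erase.2 ⟨fun h => hxe (h ▸ hx), he⟩
  · refine (hmax _ (proper_update (fun e he _ => hc e he)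
      (fun e he => hblock e (Finset.mem_of_mem_erase he)))).not_gt ?_
    exact sum_val_lt_sum_val_update hx

end Colouring

section GreedyCopy

variable {V W : Type*} [DecidableEq V] [DecidableEq W]

-- The vertices added with the `(j + 1)`-st edge of `S` get colour `a.succAbove j`,
-- the `j`-th colour other than `a`.
def IsGreedyCopy {m : ℕ} (H : FinHypergraph V) (estar : Finset V) (c : V → Fin (m + 1))
    (a : Fin (m + 1)) (S : Finset (Finset W)) (φ : W → V) : Prop :=
  Set.InjOn φ ↑(S.sup id) ∧ (∀ e ∈ S, e.image φ ∈ H.edges) ∧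
    ∀ w ∈ S.sup id, (φ w ∈ estar ∧ c (φ w) = a) ∨
      ∃ j : Fin m, (j : ℕ) + 1 < S.card ∧ c (φ w) = a.succAbove j

variable {m : ℕ} {H : FinHypergraph V} {estar : Finset V} {c : V → Fin (m + 1)} {a : Fin (m + 1)}

lemma exists_isGreedyCopy_singleton [Nonempty V] {f : Finset W} (he : estar ∈ H.edges)
    (hcard : f.card = estar.card) (ha : ∀ u ∈ estar, c u = a) :
    ∃ φ : W → V, IsGreedyCopy H estar c a {f} φ := by
  obtain ⟨φ, -, hinj, himage⟩ :=
    Set.InjOn.exists_extend_finset (φ := fun _ => Classical.arbitrary V) (A := ∅) (by simp) (Finset.disjoint_empty_left f) (by simp) hcard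
  have hmaps : ∀ w ∈ f, φ w ∈ estar := fun w hw => himage ▸ Finset.mem_image_of_mem φ hw
  refine ⟨φ, by simpa using hinj, by simpa [himage] using he, fun w hw => ?_⟩
  simp only [Finset.sup_singleton, id] at hw
  exact .inl ⟨hmaps w hw, ha _ (hmaps w hw)⟩

lemma IsGreedyCopy.attach {r : ℕ} (hH : H.Uniform r)
    (hblock : ∀ x b, x ∈ estar ∨ c x < b → ∃ e ∈ H.edges, x ∈ e ∧ ∀ y ∈ e, y ≠ x → c y = b)
    {S : Finset (Finset W)} {f : Finset W} {z : W} {φ : W → V}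
    (hφ : IsGreedyCopy H estar c a S φ) (hSm : S.card ≤ m) (hfS : f ∉ S) (hf : f.card = r)
    (hz : f ∩ S.sup id = {z}) : ∃ φ' : W → V, IsGreedyCopy H estar c a (insert f S) φ' := by
  obtain ⟨hinj, hedges, hcol⟩ := hφ
  obtain ⟨hzf, hzS⟩ := Finset.mem_inter.1 (hz ▸ Finset.mem_singleton_self z)
  have hS₀ : 0 < S.card := Finset.card_pos.2 ⟨_, (Finset.mem_sup.1 hzS).choose_spec.1⟩
  set b := a.succAbove ⟨S.card - 1, by omega⟩
  have hold : ∀ w ∈ S.sup id, (φ w ∈ estar ∧ c (φ w) = a) ∨ c (φ w) < b := by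
    refine fun w hw => (hcol w hw).imp_right fun ⟨j, hj, hcj⟩ => hcj ▸ ?_
    exact Fin.strictMono_succAbove a (Fin.mk_lt_mk.2 (by omega))
  have hold_ne : ∀ w ∈ S.sup id, c (φ w) ≠ b := fun w hw =>
    (hold w hw).elim (fun h => h.2 ▸ (Fin.succAbove_ne a _).symm) ne_of_lt
  obtain ⟨B, hB, hzB, hBcol⟩ := hblock (φ z) b ((hold z hzS).imp And.left id)
  have hdisj : Disjoint (S.sup id) (f.erase z) := by
    refine Finset.disjoint_left.2 fun w hwS hwf => ?_
    have : w ∈ f ∩ S.sup id := Finset.mem_inter.2 ⟨Finset.mem_of_mem_erase hwf, hwS⟩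
    rw [hz, Finset.mem_singleton] at this
    exact (Finset.mem_erase.1 hwf).1 this
  have : Nonempty V := ⟨φ z⟩
  obtain ⟨ψ, hψφ, hψinj, hψimage⟩ := hinj.exists_extend_finset (E := B.erase (φ z)) hdisj
    (fun w hw h => hold_ne w hw (hBcol _ (Finset.mem_of_mem_erase h) (Finset.mem_erase.1 h).1))
    (by rw [Finset.card_erase_of_mem hzf, Finset.card_erase_of_mem hzB, hf, hH B hB])
  have hnew : ∀ w ∈ f.erase z, ψ w ∈ B.erase (φ z) := fun w hw =>
    hψimage ▸ Finset.mem_image_of_mem ψ hw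
  unfold IsGreedyCopy
  simp only [sup_insert_eq_union_erase hz, Finset.card_insert_of_notMem hfS]
  refine ⟨ψ, hψinj, fun e he => ?_, fun w hw => ?_⟩
  · rcases Finset.mem_insert.1 he with rfl | he
    · rw [← Finset.insert_erase hzf, Finset.image_insert, hψimage, hψφ z hzS,
        Finset.insert_erase hzB]
      exact hB
    · rw [Finset.image_congr (s := e) fun w hw => hψφ w (Finset.mem_sup.2 ⟨e, he, hw⟩)]
      exact hedges e he
  · rcases Finset.mem_union.1 hw with hw | hw
    · rw [hψφ w hw]
      exact (hcol w hw).imp_right fun ⟨j, hj, hcj⟩ => ⟨j, by omega, hcj⟩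
    · obtain ⟨hne, hmem⟩ := Finset.mem_erase.1 (hnew w hw)
      refine .inr ⟨⟨S.card - 1, by omega⟩, ?_, hBcol _ hmem hne⟩
      simp only
      omega

lemma IsTreeFamily.exists_isGreedyCopy [Nonempty V] {r : ℕ} {S : Finset (Finset W)}
    (hS : IsTreeFamily S) (hSm : S.card ≤ m + 1) (hunif : ∀ e ∈ S, e.card = r)
    (hH : H.Uniform r) (he : estar ∈ H.edges) (ha : ∀ u ∈ estar, c u = a)
    (hblock : ∀ x b, x ∈ estar ∨ c x < b → ∃ e ∈ H.edges, x ∈ e ∧ ∀ y ∈ e, y ≠ x → c y = b) :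
    ∃ φ : W → V, IsGreedyCopy H estar c a S φ := by
  induction hS with
  | single f =>
    exact exists_isGreedyCopy_singleton he (by rw [hunif f (by simp), hH estar he]) ha
  | @attach S f z _ hfS hz ih =>
    rw [Finset.card_insert_of_notMem hfS] at hSm
    obtain ⟨φ, hφ⟩ := ih (by omega) fun e he => hunif e (Finset.mem_insert_of_mem he)
    exact hφ.attach hH hblock (by omega) hfS (hunif f (Finset.mem_insert_self f S)) hz

end GreedyCopy

end FinHypergraph

theorem stmt14_general {V : Type*} [Fintype V] [DecidableEq V] (r t : ℕ) (hr : 2 ≤ r) (ht : 1 ≤ t)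
    (H : FinHypergraph V) (hH : H.Uniform r) (estar : Finset V) (he : estar ∈ H.edges)
    (c : V → Fin t) (hc : FinHypergraph.Proper ⟨H.edges.erase estar⟩ c)
    {W : Type*} [DecidableEq W] (T : FinHypergraph W)
    (hT : T.IsHypertree) (hu : T.Uniform r) (hte : T.edges.card = t)
    (hfree : ¬ H.ContainsCopy T) :
    ∃ c' : V → Fin t, H.Proper c' := by
  obtain ⟨m, rfl⟩ : ∃ m, t = m + 1 := ⟨t - 1, by omega⟩
  by_contra! hno
  obtain ⟨c₀, hc₀, hmax⟩ := FinHypergraph.exists_proper_deleteEdge_isMax (H := H) hc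
  obtain ⟨u₀, hu₀⟩ : estar.Nonempty := Finset.card_pos.1 (by rw [hH estar he]; omega)
  have : Nonempty V := ⟨u₀⟩
  have hmono : ∀ u ∈ estar, c₀ u = c₀ u₀ := by
    by_contra! ⟨u, hu, hne⟩
    exact hno c₀ (hc₀.of_deleteEdge fun h => hne (h u hu u₀ hu₀))
  have hne : ∀ e ∈ T.edges, e.Nonempty := fun e he => Finset.card_pos.1 (by rw [hu e he]; omega)
  obtain ⟨e₀, he₀⟩ : T.edges.Nonempty := Finset.card_pos.1 (by omega)
  obtain ⟨φ, hinj, hedges, -⟩ := (hT.isTreeFamily_edges hne ⟨e₀, he₀⟩).exists_isGreedyCopy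
    hte.le hu hH he hmono fun _ _ hx => FinHypergraph.exists_blocking_edge hc₀ hmax hno hx
  refine hfree ⟨φ, Set.injOn_univ.1 ?_, hedges⟩
  simpa [Set.eq_univ_of_forall (hT.1.mem_sup_edges he₀ (hne e₀ he₀))] using hinj

/-- If `H - e*` has a proper `t`-coloring and `H` contains no copy of a fixed `r`-tree
`T` with `t` edges, then `H` itself has a proper `t`-coloring. -/
theorem stmt14 {V : Type*} [Fintype V] [DecidableEq V] (r t : ℕ) (hr : 2 ≤ r) (ht : 1 ≤ t)
    (H : FinHypergraph V) (hH : H.Uniform r) (estar : Finset V) (he : estar ∈ H.edges)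
    (c : V → Fin t) (hc : FinHypergraph.Proper ⟨H.edges.erase estar⟩ c)
    {W : Type*} [Fintype W] [DecidableEq W] (T : FinHypergraph W)
    (hT : T.IsHypertree) (hu : T.Uniform r) (hte : T.edges.card = t)
    (hfree : ¬ H.ContainsCopy T) :
    ∃ c' : V → Fin t, H.Proper c' :=
  stmt14_general r t hr ht H hH estar he c hc T hT hu hte hfree
end

section
/- For graphs (r = 2) and k ≥ 2, the Ramsey number R(K_k, T) equals (k-1)t + 1 for every tree T with t edges; that is, every red-blue edge-coloring of K_{(k-1)t+1} contains a red K_k or a blue copy of T, and there is a coloring of K_{(k-1)t} with neither. -/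
open Finset

/-!
A graph in which every vertex has degree at least `t` contains every tree `T` with `t` edges:
remove a leaf `x` of `T`, embed `T - x`, and send `x` to a neighbour of the image of its parent
lying outside the `t` image vertices.

Upper bound, by induction on `k`: if every vertex of `K_{(k-1)t+1}` has blue degree at least
`t`, the blue graph contains `T`; otherwise some vertex has more than `(k-2)t` red neighbours,
and among them there is a red `K_{k-1}` (which extends to a red `K_k`) or a blue `T`.

Lower bound: colour red the Turán graph with `k - 1` parts of size `t`. It has no `K_k`, and
every blue edge joins two vertices of the same part, so a blue copy of the connected `T` would
fit into `t` vertices.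
-/

namespace SimpleGraph

variable {V W : Type*}

lemma exists_adj_notMem_of_card_le_degree {G : SimpleGraph V} [DecidableEq V] {v : V}
    [Fintype (G.neighborSet v)] {s : Finset V} (hv : v ∈ s) (hs : #s ≤ G.degree v) :
    ∃ w, G.Adj v w ∧ w ∉ s := by
  by_contra! h
  have hsub : G.neighborFinset v ⊆ s.erase v := fun w hw ↦ by
    rw [mem_neighborFinset] at hw
    exact mem_erase.2 ⟨hw.ne', h w hw⟩
  have hle := card_le_card hsub
  rw [card_neighborFinset_eq_degree, card_erase_of_mem hv] at hle
  have hpos := card_pos.2 ⟨v, hv⟩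
  omega

lemma Preconnected.apply_eq_of_forall_adj {X : Type*} {T : SimpleGraph W} (hT : T.Preconnected)
    {g : W → X} (hg : ∀ a b, T.Adj a b → g a = g b) (a b : W) : g a = g b := by
  obtain ⟨p⟩ := hT a b
  induction p with
  | nil => rfl
  | cons hadj _ ih => exact (hg _ _ hadj).trans ih

lemma compl_induce_isContained_compl (G : SimpleGraph V) (s : Set V) : (G.induce s)ᶜ ⊑ Gᶜ :=
  ⟨⟨⟨Subtype.val, fun h ↦ ⟨Subtype.val_injective.ne h.1, h.2⟩⟩, Subtype.val_injective⟩⟩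

lemma isContained_of_copy_induce_compl_singleton {T : SimpleGraph W} {G : SimpleGraph V} {x : W}
    {y : ({x}ᶜ : Set W)} (hxy : ∀ w, T.Adj x w ↔ w = y) (f : Copy (T.induce {x}ᶜ) G) {z : V}
    (hz : G.Adj (f y) z) (hzf : z ∉ Set.range f) : T ⊑ G := by
  classical
  let g : W → V := fun w ↦ if h : w = x then z else f ⟨w, h⟩
  have hgx : g x = z := dif_pos rfl
  have hg : ∀ w : ({x}ᶜ : Set W), g w = f w := fun w ↦ dif_neg w.2
  have hgy : g y = f y := hg y
  have hmap : ∀ a b, T.Adj a b → G.Adj (g a) (g b) := by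
    intro a b hab
    by_cases ha : a = x
    · rw [ha] at hab ⊢
      rw [(hxy b).1 hab, hgx, hgy]
      exact hz.symm
    by_cases hb : b = x
    · rw [hb] at hab ⊢
      rw [(hxy a).1 hab.symm, hgx, hgy]
      exact hz
    rw [hg ⟨a, ha⟩, hg ⟨b, hb⟩]
    exact f.toHom.map_adj hab
  have hinj : Function.Injective g := by
    intro a b hab
    by_cases ha : a = x <;> by_cases hb : b = x
    · rw [ha, hb]
    · rw [ha, hgx, hg ⟨b, hb⟩] at hab
      exact (hzf ⟨_, hab.symm⟩).elim
    · rw [hb, hgx, hg ⟨a, ha⟩] at hab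
      exact (hzf ⟨_, hab⟩).elim
    · rw [hg ⟨a, ha⟩, hg ⟨b, hb⟩] at hab
      exact congrArg Subtype.val (f.injective hab)
  exact ⟨⟨⟨g, hmap _ _⟩, hinj⟩⟩

theorem IsTree.isContained_of_card_le_degree_add_one [Fintype W] {T : SimpleGraph W}
    (hT : T.IsTree) {G : SimpleGraph V} [G.LocallyFinite] [Nonempty V]
    (hG : ∀ v, Fintype.card W ≤ G.degree v + 1) : T ⊑ G := by
  refine Fintype.induction_subsingleton_or_nontrivial
    (P := fun W _ ↦ (∀ v, Fintype.card W ≤ G.degree v + 1) → ∀ T : SimpleGraph W, T.IsTree → T ⊑ G)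
    W ?_ ?_ hG T hT
  · intro W _ _ _ T _
    obtain ⟨v⟩ := ‹Nonempty V›
    exact ⟨⟨⟨fun _ ↦ v, fun h ↦ (T.ne_of_adj h (Subsingleton.elim _ _)).elim⟩,
      fun a b _ ↦ Subsingleton.elim a b⟩⟩
  · intro W _ _ ih hG T hT
    classical
    obtain ⟨x, hx⟩ := hT.exists_vert_degree_one_of_nontrivial
    obtain ⟨y, hxy, hy⟩ := degree_eq_one_iff_existsUnique_adj.1 hx
    have hcard : Fintype.card ({x}ᶜ : Set W) < Fintype.card W :=
      Fintype.card_subtype_lt (x := x) (by simp)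
    obtain ⟨f⟩ := ih _ hcard (fun v ↦ (hcard.trans_le (hG v)).le) (T.induce {x}ᶜ)
      ⟨hT.connected.induce_compl_singleton_of_degree_eq_one hx, hT.isAcyclic.induce _⟩
    let y' : ({x}ᶜ : Set W) := ⟨y, hxy.ne'⟩
    have himage : #(univ.image f) = Fintype.card ({x}ᶜ : Set W) := by
      simpa using card_image_of_injective univ f.injective
    obtain ⟨z, hz, hzf⟩ := exists_adj_notMem_of_card_le_degree (mem_image_of_mem f (mem_univ y'))
      (himage ▸ Nat.le_of_lt_succ (hcard.trans_le (hG (f y'))))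
    exact isContained_of_copy_induce_compl_singleton (y := y')
      (fun w ↦ ⟨hy w, fun h ↦ h ▸ hxy⟩) f hz (by simpa using hzf)

theorem IsTree.exists_isNClique_or_isContained_compl [Fintype W] {T : SimpleGraph W}
    (hT : T.IsTree) (j : ℕ) [Fintype V] (R : SimpleGraph V)
    (hV : j * (Fintype.card W - 1) < Fintype.card V) :
    (∃ S, R.IsNClique (j + 1) S) ∨ T ⊑ Rᶜ := by
  classical
  induction j generalizing V with
  | zero =>
    obtain ⟨v⟩ := Fintype.card_pos_iff.1 (by simpa using hV)
    exact .inl ⟨{v}, isNClique_singleton.2 rfl⟩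
  | succ j ih =>
    have : Nonempty V := Fintype.card_pos_iff.1 (by omega)
    by_cases hblue : ∀ v, Fintype.card W ≤ Rᶜ.degree v + 1
    · exact .inr (hT.isContained_of_card_le_degree_add_one hblue)
    push Not at hblue
    obtain ⟨v, hv⟩ := hblue
    have hred : j * (Fintype.card W - 1) < Fintype.card (R.neighborSet v) := by
      have hcompl := R.degree_compl v
      have hlt := R.degree_lt_card_verts v
      rw [card_neighborSet_eq_degree]
      rw [add_one_mul] at hV
      omega
    rcases ih (R.induce (R.neighborSet v)) hred with ⟨S, hS⟩ | hcopy
    · refine .inl ⟨insert v (S.map (.subtype _)), ?_⟩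
      refine ((isNClique_induce_iff _ _ _).1 hS).insert fun b hb ↦ ?_
      obtain ⟨⟨b, hb'⟩, -, rfl⟩ := mem_map.1 hb
      exact hb'
    · exact .inr (hcopy.trans (R.compl_induce_isContained_compl _))

theorem card_le_of_isContained_compl_turanGraph {T : SimpleGraph W} [Fintype W]
    (hT : T.Preconnected) {r t : ℕ} (h : T ⊑ (turanGraph (r * t) r)ᶜ) :
    Fintype.card W ≤ t := by
  obtain ⟨f⟩ := h
  have hmod : ∀ a b, (f a : ℕ) % r = (f b : ℕ) % r :=
    hT.apply_eq_of_forall_adj fun a b hab ↦ not_not.1 (f.toHom.map_adj hab).2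
  let indexInPart : W → Fin t := fun w ↦ ⟨(f w : ℕ) / r, Nat.div_lt_of_lt_mul (f w).2⟩
  have hindex : Function.Injective indexInPart := fun a b hab ↦ by
    have hdiv : (f a : ℕ) / r = (f b : ℕ) / r := congrArg Fin.val hab
    refine f.injective (Fin.ext ?_)
    change (f a : ℕ) = f b
    rw [← Nat.div_add_mod (f a : ℕ) r, ← Nat.div_add_mod (f b : ℕ) r, hdiv, hmod a b]
  simpa using Fintype.card_le_of_injective indexInPart hindex

end SimpleGraph

open SimpleGraph

theorem stmt15_general (k t : ℕ) (hk : 2 ≤ k)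
    {W : Type*} [Fintype W] (T : SimpleGraph W)
    (hconn : T.Connected) (hacyc : T.IsAcyclic) (hcard : Fintype.card W = t + 1) :
    (∀ R : SimpleGraph (Fin ((k - 1) * t + 1)),
      (∃ S : Finset (Fin ((k - 1) * t + 1)), R.IsNClique k S) ∨
      (∃ f : T →g Rᶜ, Function.Injective f)) ∧
    (∃ R : SimpleGraph (Fin ((k - 1) * t)),
      (¬ ∃ S : Finset (Fin ((k - 1) * t)), R.IsNClique k S) ∧
      ¬ ∃ f : T →g Rᶜ, Function.Injective f) := by
  have hT : T.IsTree := ⟨hconn, hacyc⟩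
  have hk' : k - 1 + 1 = k := by omega
  refine ⟨fun R ↦ ?_, turanGraph ((k - 1) * t) (k - 1), ?_, ?_⟩
  · have hramsey := hT.exists_isNClique_or_isContained_compl (k - 1) R (by simp [hcard])
    rw [hk'] at hramsey
    exact hramsey.imp_right fun ⟨f⟩ ↦ ⟨f.toHom, f.injective⟩
  · rintro ⟨S, hS⟩
    have hfree := turanGraph_cliqueFree (n := (k - 1) * t) (r := k - 1) (by omega)
    rw [hk'] at hfree
    exact hfree S hS
  · rintro ⟨f, hf⟩
    have hle := card_le_of_isContained_compl_turanGraph hconn.preconnected ⟨f.toCopy hf⟩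
    omega

/-- Chvátal's theorem: `R(K_k, T) = (k-1)t + 1` for every tree `T` with `t` edges.
A red-blue coloring of `K_n` is encoded by a graph `R` (red edges) and its
complement `Rᶜ` (blue edges). -/
theorem stmt15 (k t : ℕ) (hk : 2 ≤ k) (ht : 1 ≤ t)
    {W : Type*} [Fintype W] (T : SimpleGraph W)
    (hconn : T.Connected) (hacyc : T.IsAcyclic) (hcard : Fintype.card W = t + 1) :
    (∀ R : SimpleGraph (Fin ((k - 1) * t + 1)),
      (∃ S : Finset (Fin ((k - 1) * t + 1)), R.IsNClique k S) ∨
      (∃ f : T →g Rᶜ, Function.Injective f)) ∧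
    (∃ R : SimpleGraph (Fin ((k - 1) * t)),
      (¬ ∃ S : Finset (Fin ((k - 1) * t)), R.IsNClique k S) ∧
      ¬ ∃ f : T →g Rᶜ, Function.Injective f) :=
  stmt15_general k t hk T hconn hacyc hcard
end
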